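/- arXiv:1112.1284 — 12 statements merged into one kernel-verified Lean document; each statement's English description precedes it below -/
import Mathlib

section
/- In a relative Frobenius algebra (X,m) with unit subset U, for all f ∈ X and u,v ∈ U: (1) if f·u↓ then u·u↓; (2) if f·u↓ and f·v↓ then u·v↓; (3) if f·u↓ and f·v↓ then u = v. Consequently, for every f ∈ X there is a unique u ∈ U with f·u↓, and (symmetrically) a unique v ∈ U with v·f↓. -/
/-- `m h g f` means `h·g = f`: the product of `h` and `g` is defined and equals `f`. -/
def CondM {X : Type*} (m : X → X → X → Prop) : Prop :=
  (∀ h g f f', m h g f → m h g f' → f = f') ∧ (∀ f, ∃ h g, m h g f)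

def CondA {X : Type*} (m : X → X → X → Prop) : Prop :=
  ∀ f g h x, (∃ k, m f g k ∧ m k h x) ↔ (∃ l, m g h l ∧ m f l x)

def CondF {X : Type*} (m : X → X → X → Prop) : Prop :=
  ∀ a b c d,
    ((∃ x, m a b x ∧ m c d x) ↔ (∃ e, m e d b ∧ m a e c)) ∧
    ((∃ x, m a b x ∧ m c d x) ↔ (∃ e, m e b d ∧ m c e a))

def CondU {X : Type*} (m : X → X → X → Prop) (U : Set X) : Prop :=
  (∀ f, ∃ u ∈ U, m f u f) ∧
  (∀ f, ∃ v ∈ U, m v f f) ∧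
  (∀ f, ∀ u ∈ U, (∃ y, m f u y) → m f u f) ∧
  (∀ f, ∀ u ∈ U, (∃ y, m u f y) → m u f f)

/-- A relative Frobenius algebra: a relation `m ⊆ (X × X) × X` satisfying
(M), (A), (F), with unit subset `U` witnessing (U). -/
def RelFrobenius {X : Type*} (m : X → X → X → Prop) (U : Set X) : Prop :=
  CondM m ∧ CondA m ∧ CondF m ∧ CondU m U

/-! If `f·u = f` and `f·v = f` for units `u, v`, associativity applied to `(f·u)·v = f` makes
`u·v` defined; a defined product of two units equals both factors, so `u = v`. -/

namespace RelFrobenius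

variable {X : Type*} {m : X → X → X → Prop} {U : Set X}

theorem units_mul_defined_of_mul_right (hA : CondA m) (hU : CondU m U) {f u v : X}
    (hu : u ∈ U) (hv : v ∈ U) (hfu : ∃ y, m f u y) (hfv : ∃ y, m f v y) :
    ∃ y, m u v y := by
  obtain ⟨l, hl, -⟩ := (hA f u v f).mp ⟨f, hU.2.2.1 f u hu hfu, hU.2.2.1 f v hv hfv⟩
  exact ⟨l, hl⟩

theorem units_mul_defined_of_mul_left (hA : CondA m) (hU : CondU m U) {f u v : X}
    (hu : u ∈ U) (hv : v ∈ U) (huf : ∃ y, m u f y) (hvf : ∃ y, m v f y) :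
    ∃ y, m u v y := by
  obtain ⟨k, hk, -⟩ := (hA u v f f).mpr ⟨f, hU.2.2.2 f v hv hvf, hU.2.2.2 f u hu huf⟩
  exact ⟨k, hk⟩

theorem unit_eq_of_mul_defined (hM : CondM m) (hU : CondU m U) {u v : X}
    (hu : u ∈ U) (hv : v ∈ U) (huv : ∃ y, m u v y) : u = v :=
  hM.1 u v u v (hU.2.2.1 u v hv huv) (hU.2.2.2 v u hu huv)

theorem unit_eq_of_mul_right (hM : CondM m) (hA : CondA m) (hU : CondU m U) {f u v : X}
    (hu : u ∈ U) (hv : v ∈ U) (hfu : ∃ y, m f u y) (hfv : ∃ y, m f v y) : u = v :=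
  unit_eq_of_mul_defined hM hU hu hv (units_mul_defined_of_mul_right hA hU hu hv hfu hfv)

theorem unit_eq_of_mul_left (hM : CondM m) (hA : CondA m) (hU : CondU m U) {f u v : X}
    (hu : u ∈ U) (hv : v ∈ U) (huf : ∃ y, m u f y) (hvf : ∃ y, m v f y) : u = v :=
  unit_eq_of_mul_defined hM hU hu hv (units_mul_defined_of_mul_left hA hU hu hv huf hvf)

theorem existsUnique_right_unit (hM : CondM m) (hA : CondA m) (hU : CondU m U) (f : X) :
    ∃! u, u ∈ U ∧ ∃ y, m f u y := by
  obtain ⟨u, hu, hfu⟩ := hU.1 f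
  exact ⟨u, ⟨hu, f, hfu⟩, fun v ⟨hv, hfv⟩ => unit_eq_of_mul_right hM hA hU hv hu hfv ⟨f, hfu⟩⟩

theorem existsUnique_left_unit (hM : CondM m) (hA : CondA m) (hU : CondU m U) (f : X) :
    ∃! v, v ∈ U ∧ ∃ y, m v f y := by
  obtain ⟨v, hv, hvf⟩ := hU.2.1 f
  exact ⟨v, ⟨hv, f, hvf⟩, fun u ⟨hu, huf⟩ => unit_eq_of_mul_left hM hA hU hu hv huf ⟨f, hvf⟩⟩

end RelFrobenius

open RelFrobenius in
theorem stmt0 {X : Type*} (m : X → X → X → Prop) (U : Set X)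
    (hfrob : RelFrobenius m U) :
    (∀ f u v, u ∈ U → v ∈ U →
      ((∃ y, m f u y) → (∃ y, m u u y)) ∧
      ((∃ y, m f u y) → (∃ y, m f v y) → (∃ y, m u v y)) ∧
      ((∃ y, m f u y) → (∃ y, m f v y) → u = v)) ∧
    (∀ f, ∃! u, u ∈ U ∧ ∃ y, m f u y) ∧
    (∀ f, ∃! v, v ∈ U ∧ ∃ y, m v f y) := by
  obtain ⟨hM, hA, -, hU⟩ := hfrob
  refine ⟨fun f u v hu hv => ⟨?_, ?_, ?_⟩, existsUnique_right_unit hM hA hU,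
    existsUnique_left_unit hM hA hU⟩
  · exact fun hfu => units_mul_defined_of_mul_right hA hU hu hu hfu hfu
  · exact units_mul_defined_of_mul_right hA hU hu hv
  · exact unit_eq_of_mul_right hM hA hU hu hv
end

section
/- In a relative Frobenius algebra (X,m) with unit subset U, for all g,f ∈ X: g·f↓ if and only if there exists u ∈ U with g·u↓ and u·f↓. (That is, the domain of the multiplication is exactly the pullback of the source and target maps.) -/
section RelFrobenius

variable {X : Type*} {m : X → X → X → Prop}

theorem CondA.exists_mul_of_mul_mul (hA : CondA m) {f g h k x : X} (hfg : m f g k)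
    (hkh : m k h x) : ∃ l, m g h l :=
  let ⟨l, hgh, _⟩ := (hA f g h x).mp ⟨k, hfg, hkh⟩
  ⟨l, hgh⟩

theorem CondF.exists_mul_of_mul_eq_of_mul_eq (hF : CondF m) {a b c d e : X} (hedb : m e d b)
    (haec : m a e c) : ∃ x, m a b x ∧ m c d x :=
  (hF a b c d).1.mpr ⟨e, hedb, haec⟩

end RelFrobenius

theorem stmt1 {X : Type*} (m : X → X → X → Prop) (U : Set X)
    (hfrob : RelFrobenius m U) :
    ∀ g f, (∃ y, m g f y) ↔ ∃ u ∈ U, (∃ y, m g u y) ∧ (∃ y, m u f y) := by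
  obtain ⟨-, hA, hF, hU_right, -, hU_right_eq, hU_left_eq⟩ := hfrob
  intro g f
  constructor
  · rintro ⟨y, hgf⟩
    obtain ⟨u, hu, hgu⟩ := hU_right g
    exact ⟨u, hu, ⟨g, hgu⟩, hA.exists_mul_of_mul_mul hgu hgf⟩
  · rintro ⟨u, hu, hgu, huf⟩
    -- with `g·u = g` and `u·f = f`, (F) for `g·f = x = g·f` is witnessed by `e = u`
    obtain ⟨x, hgf, -⟩ :=
      hF.exists_mul_of_mul_eq_of_mul_eq (hU_left_eq f u hu huf) (hU_right_eq g u hu hgu)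
    exact ⟨x, hgf⟩
end

section
/- In a relative Frobenius algebra (X,m) with unit subset U, for all f ∈ X and u ∈ U: f·u↓ if and only if there exists g ∈ X with g·f = u and f·g ∈ U. (In diagrammatic terms: e ∘ s = m ∘ (1 × i) ∘ Δ; every element admits an inverse whose product with it is its source unit.) -/
section
variable {X : Type*} {m : X → X → X → Prop}

theorem CondF.exists_mul_of_mul_of_mul (hF : CondF m) {f g u w : X}
    (hgf : m g f u) (hfg : m f g w) : ∃ y, m f u y :=
  let ⟨y, hfu, _⟩ := (hF f u w f).1.mpr ⟨g, hgf, hfg⟩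
  ⟨y, hfu⟩

theorem exists_inverse_of_exists_mul_unit {U : Set X} (hF : CondF m) (hU : CondU m U)
    {f u : X} (hu : u ∈ U) (hfu : ∃ y, m f u y) : ∃ g, m g f u ∧ ∃ w ∈ U, m f g w := by
  obtain ⟨v, hv, hvf⟩ := hU.2.1 f
  obtain ⟨g, hgf, hfg⟩ := (hF f u v f).1.mp ⟨f, hU.2.2.1 f u hu hfu, hvf⟩
  exact ⟨g, hgf, v, hv, hfg⟩

end

theorem stmt2 {X : Type*} (m : X → X → X → Prop) (U : Set X)
    (hfrob : RelFrobenius m U) :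
    ∀ f u, u ∈ U → ((∃ y, m f u y) ↔ ∃ g, m g f u ∧ ∃ w ∈ U, m f g w) := by
  obtain ⟨-, -, hF, hU⟩ := hfrob
  intro f u hu
  exact ⟨exists_inverse_of_exists_mul_unit hF hU hu,
    fun ⟨_, hgf, _, _, hfg⟩ => hF.exists_mul_of_mul_of_mul hgf hfg⟩
end

section
/- In a relative Frobenius algebra (X,m) with unit subset U, for every f ∈ X there exists a unique g ∈ X such that f·g ∈ U and g·f ∈ U. (The inverse relation i is the graph of a function.) -/
/-!
For a right unit `u` and a left unit `v` of `f`, axiom (F) applied to `f·u = f = v·f` produces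
`g` with `g·f = u` and `f·g = v`. Conversely, if `g·f = u` and `f·g' = u'` with `u, u' ∈ U`,
then (F) applied in the other direction gives `g·u' = u·g'`, and the unit laws reduce the two
sides to `g` and `g'`: every left inverse equals every right inverse.
-/

section

variable {X : Type*} {m : X → X → X → Prop} {U : Set X}

theorem exists_two_sided_inverse (hF : CondF m) (hU : CondU m U) (f : X) :
    ∃ g, (∃ u ∈ U, m f g u) ∧ (∃ v ∈ U, m g f v) := by
  obtain ⟨u, hu, hfu⟩ := hU.1 f
  obtain ⟨v, hv, hvf⟩ := hU.2.1 f
  obtain ⟨g, hgf, hfg⟩ := (hF f u v f).1.mp ⟨f, hfu, hvf⟩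
  exact ⟨g, ⟨v, hv, hfg⟩, u, hu, hgf⟩

theorem left_inverse_eq_right_inverse (hM : CondM m) (hF : CondF m) (hU : CondU m U)
    {f g g' u u' : X} (hu : u ∈ U) (hu' : u' ∈ U) (hgf : m g f u) (hfg' : m f g' u') :
    g = g' := by
  obtain ⟨x, hgx, hxg'⟩ := (hF g u' u g').1.mpr ⟨f, hfg', hgf⟩
  have hg : m g u' g := hU.2.2.1 g u' hu' ⟨x, hgx⟩
  have hg' : m u g' g' := hU.2.2.2 g' u hu ⟨x, hxg'⟩
  exact (hM.1 _ _ _ _ hgx hg).symm.trans (hM.1 _ _ _ _ hxg' hg')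

end

theorem stmt3 {X : Type*} (m : X → X → X → Prop) (U : Set X)
    (hfrob : RelFrobenius m U) :
    ∀ f, ∃! g, (∃ u ∈ U, m f g u) ∧ (∃ v ∈ U, m g f v) := by
  obtain ⟨hM, -, hF, hU⟩ := hfrob
  intro f
  obtain ⟨g, hfg, hgf⟩ := exists_two_sided_inverse hF hU f
  refine ⟨g, ⟨hfg, hgf⟩, ?_⟩
  rintro g' ⟨⟨u', hu', hfg'⟩, -⟩
  obtain ⟨u, hu, hgf⟩ := hgf
  exact (left_inverse_eq_right_inverse hM hF hU hu hu' hgf hfg').symm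
end

section
/- Let G be a groupoid, let X = Σ (a b : G), (a ⟶ b) be the type of all its arrows, and let m be the relation on (X × X) × X relating ((g,f), h) exactly when the source of g equals the target of f and h is the composite of f followed by g. Then m satisfies (M), (A), (F), and (U), with unit subset U = { identity arrows 𝟙 a | a an object of G }; that is, the composition relation of a groupoid is a relative Frobenius algebra. -/
open CategoryTheory

/-! (M), (A) and (U) hold in any category: they only say that composition is a partial,
associative and unital operation. The Frobenius condition (F) is where inverses enter: a commuting
square `b ≫ a = d ≫ c` factors through the diagonal `e = d⁻¹ ≫ b` (and symmetrically
`e = b⁻¹ ≫ d`). -/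

namespace CategoryTheory

abbrev SigmaHom (C : Type*) [Category C] := Σ (a : C) (b : C), a ⟶ b

section Category

variable {C : Type*} [Category C]

/-- Arguments in the order of `m`: `CompRel g f h` means `g·f = h`, i.e. `h = f ≫ g`. -/
def CompRel : SigmaHom C → SigmaHom C → SigmaHom C → Prop := fun g f h =>
  ∃ (a b c : C) (f' : a ⟶ b) (g' : b ⟶ c),
    f = ⟨a, b, f'⟩ ∧ g = ⟨b, c, g'⟩ ∧ h = ⟨a, c, f' ≫ g'⟩

lemma SigmaHom.mk_inj {a b a' b' : C} {f : a ⟶ b} {f' : a' ⟶ b'}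
    (h : (⟨a, b, f⟩ : SigmaHom C) = ⟨a', b', f'⟩) : a = a' ∧ b = b' ∧ HEq f f' := by
  injection h with ha h'
  subst ha
  injection h' with hb hf
  exact ⟨rfl, hb, hf⟩

lemma compRel_mk {a b c : C} (f : a ⟶ b) (g : b ⟶ c) {h : a ⟶ c} (w : f ≫ g = h) :
    CompRel ⟨b, c, g⟩ ⟨a, b, f⟩ ⟨a, c, h⟩ :=
  ⟨a, b, c, f, g, rfl, rfl, w ▸ rfl⟩

lemma compRel_functional {g f h h' : SigmaHom C} (H : CompRel g f h) (H' : CompRel g f h') :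
    h = h' := by
  obtain ⟨_, _, _, _, _, rfl, rfl, rfl⟩ := H
  obtain ⟨_, _, _, _, _, hf, hg, rfl⟩ := H'
  obtain ⟨rfl, rfl, hf⟩ := SigmaHom.mk_inj hf
  obtain ⟨-, rfl, hg⟩ := SigmaHom.mk_inj hg
  cases hf; cases hg
  rfl

lemma condM_compRel : CondM (CompRel (C := C)) :=
  ⟨fun _ _ _ _ => compRel_functional,
    fun ⟨a, b, f⟩ => ⟨⟨a, b, f⟩, ⟨a, a, 𝟙 a⟩, compRel_mk (𝟙 a) f (Category.id_comp f)⟩⟩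

lemma condA_compRel : CondA (CompRel (C := C)) := by
  intro f g h x
  constructor
  · rintro ⟨_, ⟨_, _, _, g', f', rfl, rfl, rfl⟩, ⟨_, _, _, h', _, rfl, hk, rfl⟩⟩
    obtain ⟨rfl, rfl, hk⟩ := SigmaHom.mk_inj hk.symm
    cases hk
    exact ⟨_, compRel_mk h' g' rfl, compRel_mk (h' ≫ g') f' (Category.assoc _ _ _)⟩
  · rintro ⟨_, ⟨_, _, _, h', g', rfl, rfl, rfl⟩, ⟨_, _, _, _, f', hl, rfl, rfl⟩⟩
    obtain ⟨rfl, rfl, hl⟩ := SigmaHom.mk_inj hl.symm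
    cases hl
    exact ⟨_, compRel_mk g' f' rfl, compRel_mk h' (g' ≫ f') (Category.assoc _ _ _).symm⟩

def identities (C : Type*) [Category C] : Set (SigmaHom C) := { x | ∃ a : C, x = ⟨a, a, 𝟙 a⟩ }

lemma condU_compRel : CondU (CompRel (C := C)) (identities C) := by
  refine ⟨fun ⟨a, b, f⟩ => ⟨_, ⟨a, rfl⟩, compRel_mk (𝟙 a) f (Category.id_comp f)⟩,
    fun ⟨a, b, f⟩ => ⟨_, ⟨b, rfl⟩, compRel_mk f (𝟙 b) (Category.comp_id f)⟩, ?_, ?_⟩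
  · rintro f u ⟨_, rfl⟩ ⟨_, _, b, _, _, f', hu, rfl, rfl⟩
    obtain ⟨rfl, rfl, hu⟩ := SigmaHom.mk_inj hu.symm
    cases hu
    exact compRel_mk (𝟙 b) f' (Category.id_comp f')
  · rintro f u ⟨_, rfl⟩ ⟨_, _, _, _, f', _, rfl, hu, rfl⟩
    obtain ⟨rfl, rfl, hu⟩ := SigmaHom.mk_inj hu.symm
    cases hu
    exact compRel_mk f' _ (Category.comp_id f')

end Category

section Groupoid

variable {G : Type*} [Groupoid G]

lemma exists_compRel_eq_iff_left (a b c d : SigmaHom G) :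
    (∃ x, CompRel a b x ∧ CompRel c d x) ↔ (∃ e, CompRel e d b ∧ CompRel a e c) := by
  constructor
  · rintro ⟨_, ⟨_, _, _, b', a', rfl, rfl, rfl⟩, ⟨_, _, _, d', c', rfl, rfl, hx⟩⟩
    obtain ⟨rfl, rfl, hx⟩ := SigmaHom.mk_inj hx
    have hx : b' ≫ a' = d' ≫ c' := eq_of_heq hx
    refine ⟨_, compRel_mk d' (Groupoid.inv d' ≫ b') (by simp), compRel_mk _ a' ?_⟩
    rw [Category.assoc, hx]
    simp
  · rintro ⟨_, ⟨_, _, _, d', e', rfl, rfl, rfl⟩, ⟨_, _, _, _, a', he, rfl, rfl⟩⟩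
    obtain ⟨rfl, rfl, he⟩ := SigmaHom.mk_inj he
    obtain rfl := eq_of_heq he
    exact ⟨_, compRel_mk (d' ≫ e') a' rfl, compRel_mk d' (e' ≫ a') (Category.assoc _ _ _).symm⟩

lemma exists_compRel_eq_iff_right (a b c d : SigmaHom G) :
    (∃ x, CompRel a b x ∧ CompRel c d x) ↔ (∃ e, CompRel e b d ∧ CompRel c e a) := by
  constructor
  · rintro ⟨_, ⟨_, _, _, b', a', rfl, rfl, rfl⟩, ⟨_, _, _, d', c', rfl, rfl, hx⟩⟩
    obtain ⟨rfl, rfl, hx⟩ := SigmaHom.mk_inj hx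
    have hx : b' ≫ a' = d' ≫ c' := eq_of_heq hx
    refine ⟨_, compRel_mk b' (Groupoid.inv b' ≫ d') (by simp), compRel_mk _ c' ?_⟩
    rw [Category.assoc, ← hx]
    simp
  · rintro ⟨_, ⟨_, _, _, b', e', rfl, rfl, rfl⟩, ⟨_, _, _, _, c', he, rfl, rfl⟩⟩
    obtain ⟨rfl, rfl, he⟩ := SigmaHom.mk_inj he
    obtain rfl := eq_of_heq he
    exact ⟨_, compRel_mk b' (e' ≫ c') rfl, compRel_mk (b' ≫ e') c' (Category.assoc _ _ _)⟩

lemma condF_compRel : CondF (CompRel (C := G)) := fun a b c d =>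
  ⟨exists_compRel_eq_iff_left a b c d, exists_compRel_eq_iff_right a b c d⟩

end Groupoid

end CategoryTheory

theorem stmt5 (G : Type*) [Groupoid G] :
    let X := Σ (a : G) (b : G), a ⟶ b
    -- `m g f h` holds when the source of `g` is the target of `f` and `h` is the
    -- composite of `f` followed by `g`.
    let m : X → X → X → Prop := fun g f h =>
      ∃ (a b c : G) (f' : a ⟶ b) (g' : b ⟶ c),
        f = ⟨a, b, f'⟩ ∧ g = ⟨b, c, g'⟩ ∧ h = ⟨a, c, f' ≫ g'⟩
    CondM m ∧ CondA m ∧ CondF m ∧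
      CondU m { x : X | ∃ a : G, x = ⟨a, a, 𝟙 a⟩ } :=
  ⟨condM_compRel, condA_compRel, condF_compRel, condU_compRel⟩
end

section
/- Let (X,m) be a relative Frobenius algebra whose unit subset U is a singleton {u}. Then the multiplication is total (a·b↓ for all a,b ∈ X), and X carries a group structure with identity element u whose multiplication graph is m, i.e., there is a group operation * on X with a·b = c if and only if a * b = c. (Relative Frobenius algebras whose unit is a single element are exactly groups.) -/
/-!
When `u` is the only unit, both `a·u = a` and `u·a = a` hold for every `a`. Axiom (F) applied to
this pair of equal products yields `e` with `e·a = u = a·e`, and applied to `a·u = a`, `u·b = b`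
it shows that `a·b` is defined. So `m` is the graph of a total, single-valued, associative
operation with unit `u` and inverses: a group.
-/
section

variable {X : Type*} {m : X → X → X → Prop} {u : X}

theorem CondU.mul_right_of_singleton (hU : CondU m {u}) (f : X) : m f u f := by
  obtain ⟨v, rfl, hv⟩ := hU.1 f
  exact hv

theorem CondU.mul_left_of_singleton (hU : CondU m {u}) (f : X) : m u f f := by
  obtain ⟨v, rfl, hv⟩ := hU.2.1 f
  exact hv

theorem CondF.exists_mul (hF : CondF m) (hr : ∀ f, m f u f) (hl : ∀ f, m u f f) (a b : X) :
    ∃ c, m a b c := by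
  obtain ⟨c, hc, -⟩ := (hF a b a b).2.mpr ⟨u, hl b, hr a⟩
  exact ⟨c, hc⟩

theorem CondF.exists_inv (hF : CondF m) (hr : ∀ f, m f u f) (hl : ∀ f, m u f f) (a : X) :
    ∃ e, m e a u ∧ m a e u :=
  (hF a u u a).1.mp ⟨a, hr a, hl a⟩

theorem CondA.mul_assoc_of_graph (hM : CondM m) (hA : CondA m) (mul : X → X → X)
    (hmul : ∀ a b, m a b (mul a b)) (a b c : X) : mul (mul a b) c = mul a (mul b c) := by
  obtain ⟨l, hbc, habc⟩ := (hA a b c _).mp ⟨mul a b, hmul a b, hmul (mul a b) c⟩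
  rw [hM.1 b c _ _ (hmul b c) hbc]
  exact (hM.1 a l _ _ (hmul a l) habc).symm

theorem CondM.exists_group_of_total (hM : CondM m) (hA : CondA m)
    (htot : ∀ a b, ∃ c, m a b c) (hl : ∀ f, m u f f) (hinv : ∀ a, ∃ e, m e a u) :
    ∃ G : Group X, letI := G; ((1 : X) = u ∧ ∀ a b c, m a b c ↔ a * b = c) := by
  choose mul hmul using htot
  choose inv hinv using hinv
  have mul_eq_iff (a b c : X) : m a b c ↔ mul a b = c :=
    ⟨hM.1 a b _ _ (hmul a b), fun h => h ▸ hmul a b⟩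
  let _ : Mul X := ⟨mul⟩
  let _ : One X := ⟨u⟩
  let _ : Inv X := ⟨inv⟩
  let G : Group X := Group.ofLeftAxioms (hA.mul_assoc_of_graph hM mul hmul)
    (fun a => (mul_eq_iff u a a).mp (hl a)) (fun a => (mul_eq_iff _ a u).mp (hinv a))
  exact ⟨G, rfl, mul_eq_iff⟩

end

theorem stmt6 {X : Type*} (m : X → X → X → Prop) (u : X)
    (hfrob : RelFrobenius m {u}) :
    (∀ a b, ∃ c, m a b c) ∧
    ∃ G : Group X, letI := G; ((1 : X) = u ∧ ∀ a b c, m a b c ↔ a * b = c) := by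
  obtain ⟨hM, hA, hF, hU⟩ := hfrob
  have hr := hU.mul_right_of_singleton
  have hl := hU.mul_left_of_singleton
  have htot := hF.exists_mul hr hl
  exact ⟨htot, hM.exists_group_of_total hA htot hl fun a => (hF.exists_inv hr hl a).imp
    fun _ => And.left⟩
end

section
/- Let (X,m_X) and (Y,m_Y) be relative Frobenius algebras and let r ⊆ X × Y be a relation that preserves multiplication, meaning: for all x,x' ∈ X and w ∈ Y, (∃z, x·x' = z ∧ (z,w) ∈ r) if and only if (∃y y', (x,y) ∈ r ∧ (x',y') ∈ r ∧ y·y' = w). Then r satisfies condition (R): r = { (x₁·x₂, y₁·y₂) | (x₁,y₁) ∈ r, (x₂,y₂) ∈ r, x₁·x₂↓, y₁·y₂↓ }, i.e., every pair in r is a componentwise product of two pairs in r, and componentwise products of pairs in r lie in r. -/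
/-- Condition (R) for a relation `r` between relative Frobenius algebras:
`r` consists exactly of the componentwise products of pairs of elements of `r`. -/
def CondR {X Y : Type*} (mX : X → X → X → Prop) (mY : Y → Y → Y → Prop)
    (r : X → Y → Prop) : Prop :=
  ∀ x y, r x y ↔ ∃ x₁ y₁ x₂ y₂, r x₁ y₁ ∧ r x₂ y₂ ∧ mX x₁ x₂ x ∧ mY y₁ y₂ y

section PreservesMul

variable {X Y : Type*} {mX : X → X → X → Prop} {mY : Y → Y → Y → Prop} {r : X → Y → Prop}

theorem exists_factor_pairs_of_preservesMul (hsurj : ∀ f, ∃ h g, mX h g f)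
    (hmul : ∀ x x' w, (∃ z, mX x x' z ∧ r z w) → ∃ y y', r x y ∧ r x' y' ∧ mY y y' w)
    {x : X} {y : Y} (hxy : r x y) :
    ∃ x₁ y₁ x₂ y₂, r x₁ y₁ ∧ r x₂ y₂ ∧ mX x₁ x₂ x ∧ mY y₁ y₂ y := by
  obtain ⟨x₁, x₂, hx⟩ := hsurj x
  obtain ⟨y₁, y₂, h₁, h₂, hy⟩ := hmul x₁ x₂ y ⟨x, hx, hxy⟩
  exact ⟨x₁, y₁, x₂, y₂, h₁, h₂, hx, hy⟩

theorem rel_mul_of_preservesMul (hfun : ∀ h g f f', mX h g f → mX h g f' → f = f')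
    (hmul : ∀ x x' w, (∃ y y', r x y ∧ r x' y' ∧ mY y y' w) → ∃ z, mX x x' z ∧ r z w)
    {x₁ x₂ x : X} {y₁ y₂ y : Y} (h₁ : r x₁ y₁) (h₂ : r x₂ y₂)
    (hx : mX x₁ x₂ x) (hy : mY y₁ y₂ y) : r x y := by
  obtain ⟨z, hz, hzy⟩ := hmul x₁ x₂ y ⟨y₁, y₂, h₁, h₂, hy⟩
  rwa [hfun x₁ x₂ x z hx hz]

theorem CondM.condR_of_preservesMul (hM : CondM mX)
    (hmul : ∀ x x' w, (∃ z, mX x x' z ∧ r z w) ↔ ∃ y y', r x y ∧ r x' y' ∧ mY y y' w) :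
    CondR mX mY r := fun _ _ =>
  ⟨exists_factor_pairs_of_preservesMul hM.2 (fun x x' w => (hmul x x' w).1),
    fun ⟨_, _, _, _, h₁, h₂, hx, hy⟩ =>
      rel_mul_of_preservesMul hM.1 (fun x x' w => (hmul x x' w).2) h₁ h₂ hx hy⟩

end PreservesMul

theorem stmt7_general {X Y : Type*} (mX : X → X → X → Prop) (UX : Set X)
    (mY : Y → Y → Y → Prop)
    (hX : RelFrobenius mX UX)
    (r : X → Y → Prop)
    (hmul : ∀ x x' w, (∃ z, mX x x' z ∧ r z w) ↔ ∃ y y', r x y ∧ r x' y' ∧ mY y y' w) :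
    CondR mX mY r :=
  hX.1.condR_of_preservesMul hmul

theorem stmt7 {X Y : Type*} (mX : X → X → X → Prop) (UX : Set X)
    (mY : Y → Y → Y → Prop) (UY : Set Y)
    (hX : RelFrobenius mX UX) (hY : RelFrobenius mY UY)
    (r : X → Y → Prop)
    (hmul : ∀ x x' w, (∃ z, mX x x' z ∧ r z w) ↔ ∃ y y', r x y ∧ r x' y' ∧ mY y y' w) :
    CondR mX mY r :=
  stmt7_general mX UX mY hX r hmul
end

section
/- In a relative H*-algebra (X,m), for every a ∈ X there exists a* ∈ {a}* satisfying a*·a·a* = a* and a·a*·a = a. (Every element of a relative H*-algebra has a pseudoinverse lying in the star of its singleton.) -/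
/-- Condition (H): `star` is an involution on subsets of `X` such that
`x·a = y` for some `a ∈ A` iff `y·a' = x` for some `a' ∈ A*`, and symmetrically. -/
def CondH {X : Type*} (m : X → X → X → Prop) (star : Set X → Set X) : Prop :=
  (∀ A, star (star A) = A) ∧
  ∀ (A : Set X) (x y : X),
    ((∃ a ∈ A, m x a y) ↔ (∃ a' ∈ star A, m y a' x)) ∧
    ((∃ a ∈ A, m a x y) ↔ (∃ a' ∈ star A, m a' y x))

/-- A relative H*-algebra: a relation satisfying (M), (A) and (H). -/
def RelHstar {X : Type*} (m : X → X → X → Prop) (star : Set X → Set X) : Prop :=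
  CondM m ∧ CondA m ∧ CondH m star

/-- `f'` is a pseudoinverse of `f`: `f·f'·f = f` and `f'·f·f' = f'`. -/
def IsPseudoinverse {X : Type*} (m : X → X → X → Prop) (f f' : X) : Prop :=
  (∃ p, m f f' p ∧ m p f f) ∧ (∃ q, m f' f q ∧ m q f' f')


/-!
Write `f = h·g` by (M). Transposing `g` with (H) gives `f·g' = h`, so by (A) the element
`e = g'·g` is a right unit of `f`. Transposing `f` in `f·e = f` gives `f₁·f = e` with `f₁ ∈ {f}*`;
then `f·f₁·f = f·e = f` by (A). For the second equation, `e` is idempotent and (H) writes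
`f₁ = e·c`, so `f₁·f·f₁ = e·f₁ = e·e·c = e·c = f₁`.
-/

section

variable {X : Type*} {m : X → X → X → Prop} {star : Set X → Set X}

theorem CondH.exists_right_of_mul_eq (hH : CondH m star) {x a y : X} (h : m x a y) :
    ∃ a' ∈ star {a}, m y a' x :=
  ((hH.2 {a} x y).1).mp ⟨a, rfl, h⟩

theorem CondH.exists_left_of_mul_eq (hH : CondH m star) {a x y : X} (h : m a x y) :
    ∃ a' ∈ star {a}, m a' y x :=
  ((hH.2 {a} x y).2).mp ⟨a, rfl, h⟩

theorem CondA.mul_self_of_right_unit (hM : CondM m) (hA : CondA m) {f e f₁ : X}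
    (hfe : m f e f) (hf₁f : m f₁ f e) : m e e e := by
  obtain ⟨e', he', hee'⟩ := (hA f₁ f e e).mpr ⟨f, hfe, hf₁f⟩
  rwa [hM.1 _ _ _ _ he' hf₁f] at hee'

theorem CondA.mul_eq_of_mul_self (hM : CondM m) (hA : CondA m) {e c y : X}
    (hee : m e e e) (hec : m e c y) : m e y y := by
  obtain ⟨y', hy', hey'⟩ := (hA e e c y).mp ⟨e, hee, hec⟩
  rwa [hM.1 _ _ _ _ hy' hec] at hey'

theorem RelHstar.exists_right_unit (hstar : RelHstar m star) (f : X) : ∃ e, m f e f := by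
  obtain ⟨⟨-, hdecomp⟩, hA, hH⟩ := hstar
  obtain ⟨h, g, hhg⟩ := hdecomp f
  obtain ⟨g', -, hfg'⟩ := hH.exists_right_of_mul_eq hhg
  obtain ⟨e, -, hfe⟩ := (hA f g' g f).mp ⟨h, hfg', hhg⟩
  exact ⟨e, hfe⟩

theorem RelHstar.isPseudoinverse_of_right_unit (hstar : RelHstar m star) {f e f₁ : X}
    (hfe : m f e f) (hf₁f : m f₁ f e) : IsPseudoinverse m f f₁ := by
  obtain ⟨hM, hA, hH⟩ := hstar
  have hee : m e e e := hA.mul_self_of_right_unit hM hfe hf₁f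
  obtain ⟨c, -, hec⟩ := hH.exists_right_of_mul_eq hf₁f
  exact ⟨(hA f f₁ f f).mpr ⟨e, hf₁f, hfe⟩, ⟨e, hf₁f, hA.mul_eq_of_mul_self hM hee hec⟩⟩

end

theorem stmt8 {X : Type*} (m : X → X → X → Prop) (star : Set X → Set X)
    (hstar : RelHstar m star) :
    ∀ a : X, ∃ a' ∈ star {a}, IsPseudoinverse m a a' := by
  intro f
  obtain ⟨e, hfe⟩ := hstar.exists_right_unit f
  obtain ⟨f₁, hf₁, hf₁f⟩ := hstar.2.2.exists_left_of_mul_eq hfe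
  exact ⟨f₁, hf₁, hstar.isPseudoinverse_of_right_unit hfe hf₁f⟩
end

section
/- In a relative H*-algebra (X,m), if g* is a pseudoinverse of g, f* is a pseudoinverse of f, and g*·g = f·f* (both defined and equal), then g·f↓. (Composability of the induced semigroupoid: whenever the source of g equals the target of f, the product g·f is defined.) -/
/-! With `e = g'·g = f·f'`, the pseudoinverse law gives `g·e = g`, so `g·(f·f')` is defined, and
associativity (A) then forces `g·f` to be defined. -/

section

variable {X : Type*} {m : X → X → X → Prop}

theorem CondA.exists_mul_of_exists_mul_mul (hA : CondA m) {f g h l x : X}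
    (hgh : m g h l) (hfl : m f l x) : ∃ k, m f g k :=
  let ⟨k, hfg, _⟩ := (hA f g h x).mpr ⟨l, hgh, hfl⟩
  ⟨k, hfg⟩

theorem IsPseudoinverse.mul_mul_self (hfun : ∀ a b c c', m a b c → m a b c' → c = c')
    (hA : CondA m) {g g' e : X} (hg : IsPseudoinverse m g g') (he : m g' g e) : m g e g := by
  obtain ⟨⟨p, hgg', hpg⟩, -⟩ := hg
  obtain ⟨l, hg'g, hgl⟩ := (hA g g' g g).mp ⟨p, hgg', hpg⟩
  rwa [hfun _ _ _ _ hg'g he] at hgl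

end

theorem stmt10_general {X : Type*} (m : X → X → X → Prop) (star : Set X → Set X)
    (hstar : RelHstar m star) (g f g' f' : X)
    (hg : IsPseudoinverse m g g')
    (heq : ∃ e, m g' g e ∧ m f f' e) :
    ∃ y, m g f y := by
  obtain ⟨⟨hfun, -⟩, hA, -⟩ := hstar
  obtain ⟨e, hg'g, hff'⟩ := heq
  exact hA.exists_mul_of_exists_mul_mul hff' (hg.mul_mul_self hfun hA hg'g)

theorem stmt10 {X : Type*} (m : X → X → X → Prop) (star : Set X → Set X)
    (hstar : RelHstar m star) (g f g' f' : X)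
    (hg : IsPseudoinverse m g g') (hf : IsPseudoinverse m f f')
    (heq : ∃ e, m g' g e ∧ m f f' e) :
    ∃ y, m g f y :=
  stmt10_general m star hstar g f g' f' hg heq
end

section
/- In a relative H*-algebra (X,m), if h* is a pseudoinverse of h and f·h·h* = g·h* (both sides defined and equal, in the Kleene sense), then f·h = g. (The semigroupoid induced by a relative H*-algebra is locally cancellative.) -/
section RelHstar

variable {X : Type*} {m : X → X → X → Prop} {star : Set X → Set X} {a b c k t w x : X}

theorem CondH.exists_mul_eq_left (hH : CondH m star) (hbx : m b x w) : ∃ t, m w t b := by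
  obtain ⟨t, -, hwt⟩ := ((hH.2 {x} b w).1).mp ⟨x, rfl, hbx⟩
  exact ⟨t, hwt⟩

theorem CondH.exists_mem_star_mul_eq_right (hH : CondH m star) (hbx : m b x w) :
    ∃ c ∈ star {b}, m c w x :=
  ((hH.2 {b} x w).2).mp ⟨b, rfl, hbx⟩

theorem CondH.mul_eq_of_mem_star_singleton (hH : CondH m star) (hc : c ∈ star {b})
    (hack : m a c k) : m k b a := by
  obtain ⟨b', hb', hkb'⟩ := ((hH.2 (star {b}) a k).1).mp ⟨c, hc, hack⟩
  rw [hH.1, Set.mem_singleton_iff] at hb'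
  exact hb' ▸ hkb'

theorem eq_of_mul_eq_self_left (hM : CondM m) (hA : CondA m) (hkw : m k w w) (hwt : m w t b)
    (hkb : m k b a) : a = b := by
  obtain ⟨w', hkww', hw't⟩ := (hA k w t a).mpr ⟨b, hwt, hkb⟩
  rw [hM.1 k w w' w hkww' hkw] at hw't
  exact hM.1 w t a b hw't hwt

theorem RelHstar.right_cancel (hX : RelHstar m star) (hax : m a x w) (hbx : m b x w) :
    a = b := by
  obtain ⟨hM, hA, hH⟩ := hX
  obtain ⟨t, hwt⟩ := hH.exists_mul_eq_left hbx
  obtain ⟨c, hc, hcw⟩ := hH.exists_mem_star_mul_eq_right hbx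
  obtain ⟨k, hack, hkw⟩ := (hA a c w w).mpr ⟨x, hcw, hax⟩
  exact eq_of_mul_eq_self_left hM hA hkw hwt (hH.mul_eq_of_mem_star_singleton hc hack)

end RelHstar

theorem stmt11_general {X : Type*} (m : X → X → X → Prop) (star : Set X → Set X)
    (hstar : RelHstar m star) (f g h h' : X)
    (heq : ∃ w, (∃ p, m f h p ∧ m p h' w) ∧ m g h' w) :
    m f h g := by
  obtain ⟨w, ⟨p, hfh, hph'⟩, hgh'⟩ := heq
  exact hstar.right_cancel hph' hgh' ▸ hfh

theorem stmt11 {X : Type*} (m : X → X → X → Prop) (star : Set X → Set X)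
    (hstar : RelHstar m star) (f g h h' : X)
    (hps : IsPseudoinverse m h h')
    (heq : ∃ w, (∃ p, m f h p ∧ m p h' w) ∧ m g h' w) :
    m f h g :=
  stmt11_general m star hstar f g h h' heq
end

section
/- Let X be a set and m ⊆ (X × X) × X a relation satisfying (M), (A), and (U). Then m satisfies condition (H) if and only if it satisfies condition (F). (In the presence of units and associativity, the H*-algebra condition is equivalent to the Frobenius condition.) -/
/-!
(H) ⇒ (F): applied to a singleton, (H) says `c·d = x` iff `x·d' = c` for some `d' ∈ {d}*`; this
turns both Frobenius equivalences into instances of associativity.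

(F) ⇒ (H): with units, (F) gives every `f` an inverse `e`, in the sense that `e·f` and `f·e`
are units. If `x·a = y` and `a·a'` is a unit, (F) with witness `a` shows that `x·(a·a')` and
`y·a'` are defined and equal, and the first is `x`; so `y·a' = x`, and dually on the left.
This also makes inverses of inverses unique, so `A* := {inverses of elements of A}` works.
-/

section HToF

variable {X : Type*} {m : X → X → X → Prop} {star : Set X → Set X}

theorem CondH.exists_mem_star_singleton_mul_right (hH : CondH m star) (d x y : X) :
    (∃ d' ∈ star {d}, m x d' y) ↔ m y d x := by
  rw [(hH.2 (star {d}) x y).1, hH.1]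
  simp

theorem CondH.exists_mem_star_singleton_mul_left (hH : CondH m star) (c x y : X) :
    (∃ c' ∈ star {c}, m c' x y) ↔ m c y x := by
  rw [(hH.2 (star {c}) x y).2, hH.1]
  simp

theorem CondF.of_condH (hA : CondA m) (hH : CondH m star) : CondF m := by
  intro a b c d
  constructor
  · calc (∃ x, m a b x ∧ m c d x)
        ↔ ∃ x, m a b x ∧ ∃ d' ∈ star {d}, m x d' c := by
          simp only [hH.exists_mem_star_singleton_mul_right]
      _ ↔ ∃ d' ∈ star {d}, ∃ x, m a b x ∧ m x d' c := by aesop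
      _ ↔ ∃ d' ∈ star {d}, ∃ e, m b d' e ∧ m a e c :=
          exists_congr fun d' => and_congr_right fun _ => hA a b d' c
      _ ↔ ∃ e, (∃ d' ∈ star {d}, m b d' e) ∧ m a e c := by aesop
      _ ↔ ∃ e, m e d b ∧ m a e c := by simp only [hH.exists_mem_star_singleton_mul_right]
  · calc (∃ x, m a b x ∧ m c d x)
        ↔ ∃ x, m a b x ∧ ∃ c' ∈ star {c}, m c' x d := by
          simp only [hH.exists_mem_star_singleton_mul_left]
      _ ↔ ∃ c' ∈ star {c}, ∃ x, m a b x ∧ m c' x d := by aesop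
      _ ↔ ∃ c' ∈ star {c}, ∃ e, m c' a e ∧ m e b d :=
          exists_congr fun c' => and_congr_right fun _ => (hA c' a b d).symm
      _ ↔ ∃ e, m e b d ∧ ∃ c' ∈ star {c}, m c' a e := by aesop
      _ ↔ ∃ e, m e b d ∧ m c e a := by
          simp only [hH.exists_mem_star_singleton_mul_left]

end HToF

def IsInverse {X : Type*} (m : X → X → X → Prop) (U : Set X) (f e : X) : Prop :=
  (∃ u ∈ U, m e f u) ∧ (∃ v ∈ U, m f e v)

section FToH

variable {X : Type*} {m : X → X → X → Prop} {U : Set X}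

theorem IsInverse.symm {f e : X} (h : IsInverse m U f e) : IsInverse m U e f :=
  And.symm h

theorem CondF.exists_isInverse (hF : CondF m) (hU : CondU m U) (f : X) :
    ∃ e, IsInverse m U f e := by
  obtain ⟨u, hu, hfu⟩ := hU.1 f
  obtain ⟨v, hv, hvf⟩ := hU.2.1 f
  obtain ⟨e, hef, hfe⟩ := (hF f u v f).1.mp ⟨f, hfu, hvf⟩
  exact ⟨e, ⟨u, hu, hef⟩, ⟨v, hv, hfe⟩⟩

theorem CondF.mul_of_mul_right (hM : CondM m) (hF : CondF m) (hU : CondU m U)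
    {a a' v x y : X} (hv : v ∈ U) (haa' : m a a' v) (h : m x a y) : m y a' x := by
  obtain ⟨z, hxv, hya'⟩ := (hF x v y a').1.mpr ⟨a, haa', h⟩
  rwa [hM.1 _ _ _ _ hxv (hU.2.2.1 x v hv ⟨z, hxv⟩)] at hya'

theorem CondF.mul_of_mul_left (hM : CondM m) (hF : CondF m) (hU : CondU m U)
    {a a' u x y : X} (hu : u ∈ U) (ha'a : m a' a u) (h : m a x y) : m a' y x := by
  obtain ⟨z, hux, ha'y⟩ := (hF u x a' y).2.mpr ⟨a, h, ha'a⟩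
  rwa [hM.1 _ _ _ _ hux (hU.2.2.2 x u hu ⟨z, hux⟩)] at ha'y

theorem CondF.eq_of_isInverse (hM : CondM m) (hF : CondF m) (hU : CondU m U) {a b e : X}
    (hae : IsInverse m U a e) (heb : IsInverse m U e b) : a = b := by
  obtain ⟨v, hv, hav⟩ := hae.2
  obtain ⟨u, hu, heb⟩ := heb.2
  have hvb : m v b a := hF.mul_of_mul_right hM hU hu heb hav
  exact hM.1 _ _ _ _ hvb (hU.2.2.2 b v hv ⟨a, hvb⟩)

theorem CondF.condH (hM : CondM m) (hF : CondF m) (hU : CondU m U) :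
    CondH m fun A => {e | ∃ a ∈ A, IsInverse m U a e} := by
  refine ⟨fun A => Set.ext fun b => ⟨?_, fun hb => ?_⟩, fun A x y => ⟨⟨?_, ?_⟩, ⟨?_, ?_⟩⟩⟩
  · rintro ⟨e, ⟨a, ha, hae⟩, heb⟩
    rwa [← hF.eq_of_isInverse hM hU hae heb]
  · obtain ⟨e, hbe⟩ := hF.exists_isInverse hU b
    exact ⟨e, ⟨b, hb, hbe⟩, hbe.symm⟩
  · rintro ⟨a, ha, hxa⟩
    obtain ⟨e, hae⟩ := hF.exists_isInverse hU a
    obtain ⟨v, hv, hav⟩ := hae.2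
    exact ⟨e, ⟨a, ha, hae⟩, hF.mul_of_mul_right hM hU hv hav hxa⟩
  · rintro ⟨e, ⟨a, ha, ⟨u, hu, hea⟩, -⟩, hye⟩
    exact ⟨a, ha, hF.mul_of_mul_right hM hU hu hea hye⟩
  · rintro ⟨a, ha, hax⟩
    obtain ⟨e, hae⟩ := hF.exists_isInverse hU a
    obtain ⟨u, hu, hea⟩ := hae.1
    exact ⟨e, ⟨a, ha, hae⟩, hF.mul_of_mul_left hM hU hu hea hax⟩
  · rintro ⟨e, ⟨a, ha, -, ⟨v, hv, hae⟩⟩, hey⟩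
    exact ⟨a, ha, hF.mul_of_mul_left hM hU hv hae hey⟩

end FToH

theorem stmt16 {X : Type*} (m : X → X → X → Prop)
    (hM : CondM m) (hA : CondA m) (hU : ∃ U : Set X, CondU m U) :
    (∃ star : Set X → Set X, CondH m star) ↔ CondF m := by
  obtain ⟨U, hU⟩ := hU
  exact ⟨fun ⟨_, hH⟩ => CondF.of_condH hA hH, fun hF => ⟨_, hF.condH hM hU⟩⟩
end

section
/- Let (X,m) be a relative H*-algebra such that whenever g·f↓ there exist a pseudoinverse g* of g and a pseudoinverse f* of f with g*·g = f·f*. Then the subset U = { u ∈ X | u*·u = u for some pseudoinverse u* of u } satisfies the unit condition (U): for every f ∈ X there exist u,v ∈ U with f·u = f and v·f = f, and for every f ∈ X and u ∈ U, f·u↓ implies f·u = f and u·f↓ implies u·f = f. (Such a relative H*-algebra is a relative Frobenius algebra.) -/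
/-!
Both halves of (U) are mirror images of each other under `flip m`, which is again a relative
H*-algebra with the same involution, the same pseudoinverses and the same idempotents; and `U` is
exactly the set of idempotents. So it suffices to prove the right-handed halves.

If `f'` is a pseudoinverse of `f`, then `f'·f` is an idempotent right unit of `f`. If `f·u` is
defined with `u` idempotent, the hypothesis gives `e = f₁·f = u·u₁`; then `f·e = f`, and `e`
is an idempotent with `e·u = u` and `u·e = e`. This forces `e = u`: in a relative H*-algebra an
idempotent `x` with `x·y = y` and `y·x = x` equals `y`, because moving factors across these
equations with (H) applied to singletons shows `x ∈ {y}*`, whence `x·y = x`.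
-/

def HasCompatiblePseudoinverses {X : Type*} (m : X → X → X → Prop) : Prop :=
  ∀ g f, (∃ y, m g f y) →
    ∃ g' f', IsPseudoinverse m g g' ∧ IsPseudoinverse m f f' ∧ ∃ e, m g' g e ∧ m f f' e

def SingleValued {X : Type*} (m : X → X → X → Prop) : Prop :=
  ∀ h g f f', m h g f → m h g f' → f = f'

section

variable {X : Type*} {m : X → X → X → Prop} {star : Set X → Set X} {a b f g h k l u x y : X}

theorem CondA.assoc_mp (hA : CondA m) (hS : SingleValued m)
    (hfg : m f g k) (hkh : m k h x) (hgh : m g h l) : m f l x := by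
  obtain ⟨l', hgh', hfl'⟩ := (hA f g h x).1 ⟨k, hfg, hkh⟩
  exact hS _ _ _ _ hgh' hgh ▸ hfl'

theorem CondA.assoc_mpr (hA : CondA m) (hS : SingleValued m)
    (hgh : m g h l) (hfl : m f l x) (hfg : m f g k) : m k h x := by
  obtain ⟨k', hfg', hkh'⟩ := (hA f g h x).2 ⟨l, hgh, hfl⟩
  exact hS _ _ _ _ hfg' hfg ▸ hkh'

theorem CondH.exists_mem_star_singleton_right (hH : CondH m star) (hxb : m x b y) :
    ∃ a ∈ star {b}, m y a x :=
  (hH.2 {b} x y).1.1 ⟨b, rfl, hxb⟩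

theorem CondH.exists_mem_star_singleton_left (hH : CondH m star) (hbx : m b x y) :
    ∃ a ∈ star {b}, m a y x :=
  (hH.2 {b} x y).2.1 ⟨b, rfl, hbx⟩

theorem CondH.mul_singleton_right (hH : CondH m star) (ha : a ∈ star {b}) (hxa : m x a y) :
    m y b x := by
  obtain ⟨b', hb', hyb'⟩ := (hH.2 (star {b}) x y).1.1 ⟨a, ha, hxa⟩
  rw [hH.1] at hb'
  exact hb' ▸ hyb'

theorem CondH.mul_singleton_left (hH : CondH m star) (ha : a ∈ star {b}) (hax : m a x y) :
    m b y x := by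
  obtain ⟨b', hb', hb'y⟩ := (hH.2 (star {b}) x y).2.1 ⟨a, ha, hax⟩
  rw [hH.1] at hb'
  exact hb' ▸ hb'y

theorem eq_of_idempotent_of_mul_eq (hS : SingleValued m) (hA : CondA m) (hH : CondH m star)
    (hxx : m x x x) (hxy : m x y y) (hyx : m y x x) : x = y := by
  obtain ⟨t, ht, hyt⟩ := hH.exists_mem_star_singleton_right hxy
  obtain ⟨s, hs, hxs⟩ := hH.exists_mem_star_singleton_right hyx
  obtain ⟨r, hst, hxr⟩ := (hA x s t x).1 ⟨y, hxs, hyt⟩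
  have htx : t = x := hS _ _ _ _ (hH.mul_singleton_left hs hst) hxr
  subst htx
  exact hS _ _ _ _ (hH.mul_singleton_right ht hxx) hxy

theorem setOf_pseudoinverse_eq_setOf_idempotent (hS : SingleValued m) (hA : CondA m) :
    { u : X | ∃ u', IsPseudoinverse m u u' ∧ m u' u u } = { u | m u u u } := by
  ext u
  constructor
  · rintro ⟨u', ⟨-, q, hq, hqu'⟩, hu'u⟩
    rw [hS _ _ _ _ hq hu'u] at hqu'
    exact hA.assoc_mp hS hqu' hu'u hu'u
  · intro huu
    exact ⟨u, ⟨⟨u, huu, huu⟩, ⟨u, huu, huu⟩⟩, huu⟩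

theorem exists_pseudoinverse (hM : CondM m) (hH : CondH m star)
    (hyp : HasCompatiblePseudoinverses m) (f : X) : ∃ f', IsPseudoinverse m f f' := by
  obtain ⟨h, g, hhg⟩ := hM.2 f
  obtain ⟨a, -, haf⟩ := hH.exists_mem_star_singleton_left hhg
  obtain ⟨-, f', -, hf', -⟩ := hyp a f ⟨g, haf⟩
  exact ⟨f', hf'⟩

theorem exists_idempotent_mul_eq_self (hS : SingleValued m) (hA : CondA m)
    (hpinv : ∀ f, ∃ f', IsPseudoinverse m f f') (f : X) : ∃ u, m u u u ∧ m f u f := by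
  obtain ⟨f', ⟨p, hp, hpf⟩, ⟨q, hq, -⟩⟩ := hpinv f
  have hfq : m f q f := hA.assoc_mp hS hp hpf hq
  exact ⟨q, hA.assoc_mpr hS hfq hq hq, hfq⟩

theorem mul_idempotent_eq_self (hS : SingleValued m) (hA : CondA m) (hH : CondH m star)
    (hyp : HasCompatiblePseudoinverses m) (huu : m u u u) (hfu : ∃ y, m f u y) : m f u f := by
  obtain ⟨f₁, u₁, ⟨⟨p, hp, hpf⟩, -⟩, ⟨⟨p', hp', hp'u⟩, -⟩, e, hf₁f, huu₁⟩ := hyp f u hfu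
  have hfe : m f e f := hA.assoc_mp hS hp hpf hf₁f
  have heu : m e u u := hS _ _ _ _ hp' huu₁ ▸ hp'u
  have hue : m u e e := hA.assoc_mp hS huu huu₁ huu₁
  have hee : m e e e := hA.assoc_mp hS heu huu₁ huu₁
  exact eq_of_idempotent_of_mul_eq hS hA hH hee heu hue ▸ hfe

theorem SingleValued.flip (hS : SingleValued m) : SingleValued (flip m) :=
  fun h g => hS g h

theorem CondA.flip (hA : CondA m) : CondA (flip m) :=
  fun f g h x => (hA h g f x).symm

theorem CondH.flip (hH : CondH m star) : CondH (flip m) star :=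
  ⟨hH.1, fun A x y => (hH.2 A x y).symm⟩

theorem isPseudoinverse_flip (hA : CondA m) :
    IsPseudoinverse (flip m) f g ↔ IsPseudoinverse m f g :=
  and_congr (hA f g f f).symm (hA g f g g).symm

theorem HasCompatiblePseudoinverses.flip (hA : CondA m) (hyp : HasCompatiblePseudoinverses m) :
    HasCompatiblePseudoinverses (flip m) := by
  rintro g f ⟨y, hfg⟩
  obtain ⟨f', g', hf', hg', e, hf'f, hgg'⟩ := hyp f g ⟨y, hfg⟩
  exact ⟨g', f', (isPseudoinverse_flip hA).2 hg', (isPseudoinverse_flip hA).2 hf', e, hgg', hf'f⟩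

end

theorem stmt17 {X : Type*} (m : X → X → X → Prop) (star : Set X → Set X)
    (hstar : RelHstar m star)
    (hyp : ∀ g f, (∃ y, m g f y) →
      ∃ g' f', IsPseudoinverse m g g' ∧ IsPseudoinverse m f f' ∧
        ∃ e, m g' g e ∧ m f f' e) :
    CondU m { u : X | ∃ u', IsPseudoinverse m u u' ∧ m u' u u } := by
  obtain ⟨hM, hA, hH⟩ := hstar
  have hS : SingleValued m := hM.1
  have hpinv := exists_pseudoinverse hM hH hyp
  have hpinv_flip (f : X) : ∃ f', IsPseudoinverse (flip m) f f' :=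
    (hpinv f).imp fun _ => (isPseudoinverse_flip hA).2
  rw [setOf_pseudoinverse_eq_setOf_idempotent hS hA]
  exact ⟨exists_idempotent_mul_eq_self hS hA hpinv,
    exists_idempotent_mul_eq_self hS.flip hA.flip hpinv_flip,
    fun _ _ hu => mul_idempotent_eq_self hS hA hH hyp hu,
    fun _ _ hu => mul_idempotent_eq_self hS.flip hA.flip hH.flip
      (HasCompatiblePseudoinverses.flip hA hyp) hu⟩
end
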